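/- Suppose |S| = |R| = n, M_0 = ∅, and for i = 1,…,n, P_i is an augmenting path with respect to M_{i−1} starting at request r_i and ending at server s_i, and M_i = M_{i−1} ⊕ P_i. Fix t > 1 and assume φ_t(P_i) ≤ t·d(s_i, r_i) for every i (this holds when each P_i is a minimum t-net-cost augmenting path, since the single edge (s_i, r_i) is itself an augmenting path). Let H = {i : (t−1)·ℓ(P_i) ≤ 4·φ_t(P_i)} be the set of short paths. Then (4 + 4/(t−1)) · ∑_{i ∈ H} d(s_i, r_i) ≥ ∑_{i=1}^{n} d(s_i, r_i); i.e., the cost of the short edges of the online matching M = {(s_i, r_i) : 1 ≤ i ≤ n} is at least a (t−1)/(4t) fraction of the total online matching cost. -/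

import Mathlib

/-- The cost of a matching, viewed as a finite set of (server, request) pairs. -/
noncomputable def matchCost {X : Type*} [MetricSpace X] (M : Finset (X × X)) : ℝ :=
  ∑ e ∈ M, dist e.1 e.2

/-- `M` is a matching between the finite point sets `S` and `R`: every edge
goes from `S` to `R` and every point appears in at most one edge. -/
def IsMatching {X : Type*} (S R : Finset X) (M : Finset (X × X)) : Prop :=
  (∀ e ∈ M, e.1 ∈ S ∧ e.2 ∈ R) ∧
    ∀ e ∈ M, ∀ e' ∈ M, e ≠ e' → e.1 ≠ e'.1 ∧ e.2 ≠ e'.2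

/-- An augmenting path with respect to the matching `M`, given in 0-indexed
form: the path is `r^0, s^1, r^1, …, r^{k-1}, s^k` where `rp j = r^j`
(for `j < k`) and `sp j = s^{j+1}` (for `j < k`).  Its non-matching edges are
`(sp j, rp j)` for `j < k` and its matching edges are `(sp j, rp (j+1))` for
`j < k - 1`; the endpoints `rp 0` and `sp (k-1)` are unmatched in `M`, and all
`2k` points are distinct. -/
structure AugPath {X : Type*} (S R : Finset X) (M : Finset (X × X)) where
  k : ℕ
  hk : 1 ≤ k
  sp : ℕ → X
  rp : ℕ → X
  sp_mem : ∀ j < k, sp j ∈ S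
  rp_mem : ∀ j < k, rp j ∈ R
  sp_inj : ∀ j < k, ∀ j' < k, sp j = sp j' → j = j'
  rp_inj : ∀ j < k, ∀ j' < k, rp j = rp j' → j = j'
  edge_mem : ∀ j < k - 1, (sp j, rp (j + 1)) ∈ M
  edge_not_mem : ∀ j < k, (sp j, rp j) ∉ M
  free_start : ∀ e ∈ M, e.2 ≠ rp 0
  free_end : ∀ e ∈ M, e.1 ≠ sp (k - 1)

/-- The `t`-net-cost `φ_t(P)` of an augmenting path. -/
noncomputable def AugPath.netCost {X : Type*} [MetricSpace X] {S R : Finset X}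
    {M : Finset (X × X)} (P : AugPath S R M) (t : ℝ) : ℝ :=
  t * ∑ j ∈ Finset.range P.k, dist (P.sp j) (P.rp j) -
    ∑ j ∈ Finset.range (P.k - 1), dist (P.sp j) (P.rp (j + 1))

/-- The length `ℓ(P)` of an augmenting path. -/
noncomputable def AugPath.len {X : Type*} [MetricSpace X] {S R : Finset X}
    {M : Finset (X × X)} (P : AugPath S R M) : ℝ :=
  (∑ j ∈ Finset.range P.k, dist (P.sp j) (P.rp j)) +
    ∑ j ∈ Finset.range (P.k - 1), dist (P.sp j) (P.rp (j + 1))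

/-- The matching `M ⊕ P` obtained by augmenting `M` along `P`. -/
def AugPath.augment {X : Type*} [DecidableEq X] {S R : Finset X}
    {M : Finset (X × X)} (P : AugPath S R M) : Finset (X × X) :=
  (M \ (Finset.range (P.k - 1)).image (fun j => (P.sp j, P.rp (j + 1)))) ∪
    (Finset.range P.k).image (fun j => (P.sp j, P.rp j))

/-!
Write `a(P)` and `b(P)` for the total length of the non-matching and of the matching edges of an
augmenting path, so that `φ_t = t·a − b` and `ℓ = a + b`. Augmenting along `P` changes the matching
cost by `a(P) − b(P)`, hence `∑ (a − b)` telescopes to the nonnegative cost of the final matching,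
and `∑ φ_t = (t−1)/2 · ∑ ℓ + (t+1)/2 · ∑ (a − b) ≥ (t−1)/2 · ∑ ℓ`. Long paths have
`φ_t < (t−1)/4 · ℓ`, so the short paths carry `∑_H φ_t ≥ (t−1)/4 · ∑ ℓ ≥ (t−1)/4 · ∑ d(s_i, r_i)`
(triangle inequality along each path), while `∑_H φ_t ≤ t · ∑_H d(s_i, r_i)` by hypothesis.
-/

open Finset

section MatchingCost

variable {X : Type*}

section Metric

variable [MetricSpace X]

lemma matchCost_nonneg (M : Finset (X × X)) : 0 ≤ matchCost M :=
  sum_nonneg fun _ _ => dist_nonneg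

lemma dist_le_sum_zigzag (s r : ℕ → X) (m : ℕ) :
    dist (s m) (r 0) ≤
      ∑ j ∈ range (m + 1), dist (s j) (r j) + ∑ j ∈ range m, dist (s j) (r (j + 1)) := by
  induction m with
  | zero => simp
  | succ m ih =>
    have htri := dist_triangle4 (s (m + 1)) (r (m + 1)) (s m) (r 0)
    rw [dist_comm (r _)] at htri
    rw [sum_range_succ, sum_range_succ (fun j => dist (s j) (r (j + 1)))]
    linarith

end Metric

namespace AugPath

variable {S R : Finset X} {M : Finset (X × X)} (P : AugPath S R M)

section Edges

variable [DecidableEq X]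

def removedEdges : Finset (X × X) := (range (P.k - 1)).image fun j => (P.sp j, P.rp (j + 1))

def addedEdges : Finset (X × X) := (range P.k).image fun j => (P.sp j, P.rp j)

lemma augment_eq : P.augment = (M \ P.removedEdges) ∪ P.addedEdges := rfl

lemma removedEdges_subset : P.removedEdges ⊆ M := by
  simp only [removedEdges, image_subset_iff, mem_range]
  exact P.edge_mem

lemma disjoint_addedEdges : Disjoint M P.addedEdges := by
  refine disjoint_left.mpr fun e he hadd => ?_
  obtain ⟨j, hj, rfl⟩ := mem_image.mp hadd
  exact P.edge_not_mem j (mem_range.mp hj) he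

end Edges

variable [MetricSpace X]

noncomputable def addedCost : ℝ := ∑ j ∈ range P.k, dist (P.sp j) (P.rp j)

noncomputable def removedCost : ℝ := ∑ j ∈ range (P.k - 1), dist (P.sp j) (P.rp (j + 1))

lemma len_eq : P.len = P.addedCost + P.removedCost := rfl

lemma netCost_eq_len (t : ℝ) :
    P.netCost t = (t - 1) / 2 * P.len + (t + 1) / 2 * (P.addedCost - P.removedCost) := by
  rw [len_eq, netCost, addedCost, removedCost]
  ring

lemma dist_end_start_le_len : dist (P.sp (P.k - 1)) (P.rp 0) ≤ P.len := by
  have h := dist_le_sum_zigzag P.sp P.rp (P.k - 1)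
  rwa [Nat.sub_add_cancel P.hk] at h

variable [DecidableEq X]

lemma matchCost_addedEdges : matchCost P.addedEdges = P.addedCost := by
  refine sum_image fun x hx y hy h => ?_
  exact P.sp_inj x (mem_range.mp hx) y (mem_range.mp hy) (congrArg Prod.fst h)

lemma matchCost_removedEdges : matchCost P.removedEdges = P.removedCost := by
  have hk : ∀ j ∈ range (P.k - 1), j < P.k := fun j hj => by
    have := mem_range.mp hj
    omega
  exact sum_image fun x hx y hy h => P.sp_inj x (hk x hx) y (hk y hy) (congrArg Prod.fst h)

lemma matchCost_augment :
    matchCost P.augment = matchCost M + P.addedCost - P.removedCost := by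
  have hsplit := sum_sdiff (f := fun e : X × X => dist e.1 e.2) P.removedEdges_subset
  rw [augment_eq, matchCost, sum_union (P.disjoint_addedEdges.mono_left sdiff_subset),
    ← matchCost_addedEdges, ← matchCost_removedEdges]
  simp only [matchCost] at hsplit ⊢
  linarith

end AugPath

lemma sum_addedCost_sub_removedCost [MetricSpace X] [DecidableEq X] {S R : Finset X} {n : ℕ}
    (M : ℕ → Finset (X × X)) (P : (i : Fin n) → AugPath S R (M i))
    (hrec : ∀ i : Fin n, M ((i : ℕ) + 1) = (P i).augment) :
    ∑ i, ((P i).addedCost - (P i).removedCost) = matchCost (M n) - matchCost (M 0) := by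
  calc ∑ i, ((P i).addedCost - (P i).removedCost)
      = ∑ i : Fin n, (matchCost (M (i + 1)) - matchCost (M i)) :=
        sum_congr rfl fun i _ => by rw [hrec, AugPath.matchCost_augment]; ring
    _ = ∑ i ∈ range n, (matchCost (M (i + 1)) - matchCost (M i)) :=
        Fin.sum_univ_eq_sum_range (fun i => matchCost (M (i + 1)) - matchCost (M i)) n
    _ = matchCost (M n) - matchCost (M 0) := sum_range_sub (fun i => matchCost (M i)) n

end MatchingCost

theorem sum_le_mul_sum_short {ι : Type*} [Fintype ι] (φ ℓ d : ι → ℝ) {t : ℝ} (ht : 1 < t)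
    (hd : ∀ i, 0 ≤ d i) (hdℓ : ∀ i, d i ≤ ℓ i) (hφ : ∀ i, φ i ≤ t * d i)
    (hsum : (t - 1) / 2 * ∑ i, ℓ i ≤ ∑ i, φ i) :
    ∑ i, d i ≤ (4 + 4 / (t - 1)) * ∑ i ∈ univ.filter (fun i => (t - 1) * ℓ i ≤ 4 * φ i), d i := by
  have ht1 : 0 < t - 1 := sub_pos.mpr ht
  have hℓ : ∀ i, 0 ≤ ℓ i := fun i => (hd i).trans (hdℓ i)
  set short := univ.filter fun i => (t - 1) * ℓ i ≤ 4 * φ i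
  have hlong : ∑ i ∈ univ.filter (fun i => ¬(t - 1) * ℓ i ≤ 4 * φ i), φ i ≤
      (t - 1) / 4 * ∑ i, ℓ i := by
    rw [mul_sum]
    calc _ ≤ ∑ i ∈ univ.filter (fun i => ¬(t - 1) * ℓ i ≤ 4 * φ i), (t - 1) / 4 * ℓ i :=
          sum_le_sum fun i hi => by linarith [(mem_filter.mp hi).2]
      _ ≤ ∑ i, (t - 1) / 4 * ℓ i :=
          sum_le_sum_of_subset_of_nonneg (subset_univ _)
            fun i _ _ => mul_nonneg (by linarith) (hℓ i)
  have hshort : ∑ i ∈ short, φ i ≤ t * ∑ i ∈ short, d i := by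
    rw [mul_sum]
    exact sum_le_sum fun i _ => hφ i
  have hsplit := sum_filter_add_sum_filter_not univ (fun i => (t - 1) * ℓ i ≤ 4 * φ i) φ
  have hdℓsum : (t - 1) * ∑ i, d i ≤ (t - 1) * ∑ i, ℓ i :=
    mul_le_mul_of_nonneg_left (sum_le_sum fun i _ => hdℓ i) ht1.le
  have hcoef : 4 + 4 / (t - 1) = 4 * t / (t - 1) := by field_simp; ring
  rw [hcoef, div_mul_eq_mul_div, le_div_iff₀ ht1]
  linarith

theorem short_edges_cost_fraction_general {X : Type*} [MetricSpace X] [DecidableEq X]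
    (S R : Finset X) (n : ℕ)
    (M : ℕ → Finset (X × X)) (hM0 : M 0 = ∅)
    (P : (i : Fin n) → AugPath S R (M i))
    (hrec : ∀ i : Fin n, M ((i : ℕ) + 1) = (P i).augment)
    (t : ℝ) (ht : 1 < t)
    (hmin : ∀ i : Fin n,
      (P i).netCost t ≤ t * dist ((P i).sp ((P i).k - 1)) ((P i).rp 0)) :
    ∑ i, dist ((P i).sp ((P i).k - 1)) ((P i).rp 0) ≤
      (4 + 4 / (t - 1)) *
        ∑ i ∈ Finset.univ.filter
            (fun i => (t - 1) * (P i).len ≤ 4 * (P i).netCost t),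
          dist ((P i).sp ((P i).k - 1)) ((P i).rp 0) := by
  have hbalance : 0 ≤ ∑ i, ((P i).addedCost - (P i).removedCost) := by
    rw [sum_addedCost_sub_removedCost M P hrec, hM0]
    simpa [matchCost] using matchCost_nonneg (M n)
  refine sum_le_mul_sum_short (fun i => (P i).netCost t) (fun i => (P i).len) _ ht
    (fun _ => dist_nonneg) (fun i => (P i).dist_end_start_le_len) hmin ?_
  simp only [AugPath.netCost_eq_len, sum_add_distrib, ← mul_sum]
  linarith [mul_nonneg (by linarith : (0 : ℝ) ≤ (t + 1) / 2) hbalance]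

/-- With `|S| = |R| = n`, `M_0 = ∅` and `M_i = M_{i−1} ⊕ P_i`
(0-indexed below), where `P_i` starts at request `r_i = (P i).rp 0` and ends at
server `s_i = (P i).sp ((P i).k − 1)`, fix `t > 1` and assume
`φ_t(P_i) ≤ t·d(s_i, r_i)` for every `i`.  Let `H` be the set of short paths,
i.e. those `i` with `(t−1)·ℓ(P_i) ≤ 4·φ_t(P_i)`.  Then
`(4 + 4/(t−1)) · ∑_{i ∈ H} d(s_i, r_i) ≥ ∑_{i=1}^{n} d(s_i, r_i)`:
the cost of the short edges of the online matching is at least a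
`(t−1)/(4t)` fraction of the total online matching cost. -/
theorem short_edges_cost_fraction {X : Type*} [MetricSpace X] [DecidableEq X]
    (S R : Finset X) (hdisj : Disjoint S R) (n : ℕ)
    (hS : S.card = n) (hR : R.card = n)
    (M : ℕ → Finset (X × X)) (hM0 : M 0 = ∅)
    (P : (i : Fin n) → AugPath S R (M i))
    (hrec : ∀ i : Fin n, M ((i : ℕ) + 1) = (P i).augment)
    (t : ℝ) (ht : 1 < t)
    (hmin : ∀ i : Fin n,
      (P i).netCost t ≤ t * dist ((P i).sp ((P i).k - 1)) ((P i).rp 0)) :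
    ∑ i, dist ((P i).sp ((P i).k - 1)) ((P i).rp 0) ≤
      (4 + 4 / (t - 1)) *
        ∑ i ∈ Finset.univ.filter
            (fun i => (t - 1) * (P i).len ≤ 4 * (P i).netCost t),
          dist ((P i).sp ((P i).k - 1)) ((P i).rp 0) :=
  short_edges_cost_fraction_general S R n M hM0 P hrec t ht hmin
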